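/- arXiv:2309.15458 — 2 statements merged into one kernel-verified Lean document; each statement's English description precedes it below -/
import Mathlib

section
/- Let φ_f : {0,1}^L → {0,1} be the indicator of a clause with negation pattern n (φ_f(v) = 0 iff v_j = n_j for all j). For independent marginals Q_j on {0,1} and any index i, define the vanilla message M(v_i) = ∑_{v_{-i}} φ_f(v_i, v_{-i}) ∏_{j≠i} Q_j(v_j) and the simplified message M'(v_i) = 1[v_i = ¬n_i] · ∏_{j≠i} Q_j(n_j). Then M(v_i) - M'(v_i) is a constant independent of v_i; consequently softmax(φ_u + w·M) = softmax(φ_u + w·M') for any unary potential φ_u : {0,1} → ℝ and weight w ∈ ℝ. -/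
open Finset

/-!
Summing the unconstrained product `1[v i = b] ∏_{j ≠ i} Q j (v j)` over all `v` factorises into
`∏_{j ≠ i} (Q j false + Q j true) = 1`. The clause factor removes exactly the one assignment
`v = n`, which lies in the fibre `v i = b` only for `b = n i`, so
`M b = 1 - 1[b = n i] · P` with `P = ∏_{j ≠ i} Q j (n j)`, while `M' b = 1[b ≠ n i] · P`.
Hence `M - M' = 1 - P`, and softmax is invariant under adding a constant.
-/

section Marginal

variable {ι α R : Type*} [Fintype ι] [DecidableEq ι] [DecidableEq α]
  [CommSemiring R]

theorem ite_eval_prod_erase_eq_prod_update (Q : ι → α → R) (i : ι) (b : α) (v : ι → α) :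
    (if v i = b then ∏ j ∈ univ.erase i, Q j (v j) else 0)
      = ∏ j, Function.update Q i (fun x ↦ if x = b then 1 else 0) j (v j) := by
  rw [← mul_prod_erase univ _ (mem_univ i), Function.update_self,
    prod_congr rfl fun j hj ↦ congrFun (Function.update_of_ne (ne_of_mem_erase hj) _ Q) (v j)]
  split_ifs <;> simp

theorem sum_ite_eval_prod_erase [Fintype α] (Q : ι → α → R) (i : ι) (b : α) :
    ∑ v : ι → α, (if v i = b then ∏ j ∈ univ.erase i, Q j (v j) else 0)
      = ∏ j ∈ univ.erase i, ∑ x, Q j x := by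
  simp_rw [ite_eval_prod_erase_eq_prod_update, ← Fintype.prod_sum,
    ← mul_prod_erase univ _ (mem_univ i), Function.update_self, Fintype.sum_ite_eq', one_mul]
  exact prod_congr rfl fun j hj ↦ by rw [Function.update_of_ne (ne_of_mem_erase hj)]

end Marginal

theorem sum_ite_mul_ite_eq_sub {X R : Type*} [Fintype X] [DecidableEq X] [CommRing R]
    (p : X → Prop) [DecidablePred p] (F : X → R) (n : X) :
    ∑ x, (if p x then (if x = n then 0 else 1) * F x else 0)
      = ∑ x, (if p x then F x else 0) - if p n then F n else 0 := by
  rw [eq_sub_iff_add_eq, ← Fintype.sum_ite_eq' n fun x ↦ if p x then F x else 0,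
    ← sum_add_distrib]
  refine sum_congr rfl fun x _ ↦ ?_
  split_ifs <;> simp_all

theorem exp_div_sum_exp_add_const {ι : Type*} [Fintype ι] (f : ι → ℝ) (c : ℝ) (b : ι) :
    Real.exp (f b + c) / ∑ b', Real.exp (f b' + c) = Real.exp (f b) / ∑ b', Real.exp (f b') := by
  simp_rw [Real.exp_add, ← sum_mul]
  exact mul_div_mul_right _ _ (Real.exp_pos c).ne'

theorem clause_message_simplification_general (L : ℕ) (n : Fin L → Bool)
    (Q : Fin L → Bool → ℝ)
    (hQsum : ∀ j, Q j false + Q j true = 1)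
    (i : Fin L) (M M' : Bool → ℝ)
    (hM : ∀ b, M b = ∑ v : Fin L → Bool,
      if v i = b then
        (if v = n then (0 : ℝ) else 1) * ∏ j ∈ Finset.univ.erase i, Q j (v j)
      else 0)
    (hM' : ∀ b, M' b
      = (if b = !(n i) then (1 : ℝ) else 0) * ∏ j ∈ Finset.univ.erase i, Q j (n j)) :
    (∃ c, ∀ b, M b - M' b = c)
    ∧ ∀ (φu : Bool → ℝ) (w : ℝ) (b : Bool),
        Real.exp (φu b + w * M b) / (∑ b' : Bool, Real.exp (φu b' + w * M b'))
          = Real.exp (φu b + w * M' b)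
            / (∑ b' : Bool, Real.exp (φu b' + w * M' b')) := by
  set P := ∏ j ∈ univ.erase i, Q j (n j)
  have hM_eq : ∀ b, M b = 1 - if n i = b then P else 0 := fun b ↦ by
    rw [hM, sum_ite_mul_ite_eq_sub (· i = b) _ n, sum_ite_eval_prod_erase,
      prod_eq_one fun j _ ↦ by rw [Fintype.sum_bool, add_comm, hQsum]]
  have hM_sub : ∀ b, M b = M' b + (1 - P) := fun b ↦ by
    rw [hM_eq, hM']
    cases b <;> cases n i <;> simp
  refine ⟨⟨1 - P, fun b ↦ by rw [hM_sub]; ring⟩, fun φu w b ↦ ?_⟩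
  simp_rw [hM_sub, mul_add, ← add_assoc]
  exact exp_div_sum_exp_add_const (fun x ↦ φu x + w * M' x) _ b

/-- The vanilla clause message and the simplified (true-premise) message differ
by a constant in `v_i`; hence they give the same softmax-normalized update. -/
theorem clause_message_simplification (L : ℕ) (n : Fin L → Bool)
    (Q : Fin L → Bool → ℝ)
    (hQsum : ∀ j, Q j false + Q j true = 1) (hQpos : ∀ j b, 0 ≤ Q j b)
    (i : Fin L) (M M' : Bool → ℝ)
    (hM : ∀ b, M b = ∑ v : Fin L → Bool,
      if v i = b then
        (if v = n then (0 : ℝ) else 1) * ∏ j ∈ Finset.univ.erase i, Q j (v j)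
      else 0)
    (hM' : ∀ b, M' b
      = (if b = !(n i) then (1 : ℝ) else 0) * ∏ j ∈ Finset.univ.erase i, Q j (n j)) :
    (∃ c, ∀ b, M b - M' b = c)
    ∧ ∀ (φu : Bool → ℝ) (w : ℝ) (b : Bool),
        Real.exp (φu b + w * M b) / (∑ b' : Bool, Real.exp (φu b' + w * M b'))
          = Real.exp (φu b + w * M' b)
            / (∑ b' : Bool, Real.exp (φu b' + w * M' b')) :=
  clause_message_simplification_general L n Q hQsum i M M' hM hM'
end

section
/- Complexity reduction count: for a clause of length L over binary variables, the vanilla grounding-message computation ∑_{v_{-i}} φ(v_i, v_{-i}) ∏_{j≠i} Q_j(v_j) sums over exactly 2^{L-1} assignments, while the simplified message 1[v_i = ¬n_i] ∏_{j≠i} Q_j(n_j) is a product of exactly L-1 factors; both produce distributions equal after softmax normalization with any unary potential. -/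
/-!
Every assignment with `v i = b` other than `n` satisfies the clause, and the weights
`∏_{j ≠ i} Q_j(v_j)` over the fibre `{v | v i = b}` sum to `1`. Hence the vanilla message is
`M b = 1 - [n_i = b] ∏_{j ≠ i} Q_j(n_j)`, which differs from the simplified message
`M' b = [b = ¬n_i] ∏_{j ≠ i} Q_j(n_j)` by a constant independent of `b`; softmax is
invariant under such shifts.
-/

open Finset

theorem exp_add_div_sum_exp_add {α : Type*} [Fintype α] (s : α → ℝ) (c : ℝ) (a : α) :
    Real.exp (s a + c) / ∑ b, Real.exp (s b + c) = Real.exp (s a) / ∑ b, Real.exp (s b) := by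
  simp_rw [Real.exp_add, ← sum_mul]
  exact mul_div_mul_right _ _ (Real.exp_ne_zero c)

theorem sum_ite_apply_eq_prod_erase {ι β R : Type*} [Fintype ι] [DecidableEq ι] [Fintype β]
    [DecidableEq β] [CommSemiring R] (f : ι → β → R) (i : ι) (b : β) :
    (∑ v : ι → β, if v i = b then ∏ j ∈ univ.erase i, f j (v j) else 0)
      = ∏ j ∈ univ.erase i, ∑ x, f j x := by
  -- Absorb the constraint `v i = b` as an indicator factor at coordinate `i`.
  set g : ι → β → R := fun j x => if j = i then (if x = b then 1 else 0) else f j x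
  have hprod : ∀ v : ι → β, ∏ j, g j (v j)
      = if v i = b then ∏ j ∈ univ.erase i, f j (v j) else 0 := by
    intro v
    rw [← mul_prod_erase univ _ (mem_univ i)]
    simp only [g, if_pos rfl, ite_mul, one_mul, zero_mul]
    congr 1
    exact prod_congr rfl fun j hj => if_neg (ne_of_mem_erase hj)
  have hsum : ∏ j, ∑ x, g j x = ∏ j ∈ univ.erase i, ∑ x, f j x := by
    rw [← mul_prod_erase univ _ (mem_univ i)]
    simp only [g, if_pos rfl, sum_ite_eq', mem_univ]
    exact (one_mul _).trans (prod_congr rfl fun j hj => by simp [ne_of_mem_erase hj])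
  simp_rw [← hprod, ← hsum, prod_univ_sum, Fintype.piFinset_univ]

theorem sum_clause_message_eq {ι : Type*} [Fintype ι] [DecidableEq ι] (n : ι → Bool) (i : ι)
    (Q : ι → Bool → ℝ) (hQ : ∀ j, Q j false + Q j true = 1) (b : Bool) :
    (∑ v : ι → Bool, if v i = b then
        (if v = n then (0 : ℝ) else 1) * ∏ j ∈ univ.erase i, Q j (v j) else 0)
      = 1 - if n i = b then ∏ j ∈ univ.erase i, Q j (n j) else 0 := by
  have hsplit : ∀ v : ι → Bool,
      (if v i = b then (if v = n then (0 : ℝ) else 1) * ∏ j ∈ univ.erase i, Q j (v j) else 0)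
        = (if v i = b then ∏ j ∈ univ.erase i, Q j (v j) else 0)
          - if v = n then (if v i = b then ∏ j ∈ univ.erase i, Q j (v j) else 0) else 0 := by
    intro v
    split_ifs <;> simp
  rw [sum_congr rfl fun v _ => hsplit v, sum_sub_distrib, sum_ite_apply_eq_prod_erase,
    sum_ite_eq']
  simp [add_comm, hQ]

theorem complexity_reduction_count_general (L : ℕ) (n : Fin L → Bool)
    (i : Fin L) (Q : Fin L → Bool → ℝ)
    (hQsum : ∀ j, Q j false + Q j true = 1)
    (M M' : Bool → ℝ)
    (hM : ∀ b, M b = ∑ v : Fin L → Bool,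
      if v i = b then
        (if v = n then (0 : ℝ) else 1) * ∏ j ∈ Finset.univ.erase i, Q j (v j)
      else 0)
    (hM' : ∀ b, M' b = (if b = !(n i) then (1 : ℝ) else 0)
        * ∏ j ∈ Finset.univ.erase i, Q j (n j)) :
    Fintype.card ({j // j ∈ Finset.univ.erase i} → Bool) = 2 ^ (L - 1)
    ∧ (Finset.univ.erase i).card = L - 1
    ∧ ∀ (φu : Bool → ℝ) (wt : ℝ) (b : Bool),
        Real.exp (φu b + wt * M b)
            / (∑ b' : Bool, Real.exp (φu b' + wt * M b'))
          = Real.exp (φu b + wt * M' b)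
            / (∑ b' : Bool, Real.exp (φu b' + wt * M' b')) := by
  have hcard : (univ.erase i).card = L - 1 := by simp [card_erase_of_mem]
  refine ⟨by simp, hcard, ?_⟩
  have hshift : ∀ b, M b = M' b + (1 - ∏ j ∈ univ.erase i, Q j (n j)) := by
    intro b
    rw [hM, hM', sum_clause_message_eq n i Q hQsum]
    cases b <;> cases n i <;> simp
  intro φu wt b
  simp_rw [hshift, mul_add, ← add_assoc]
  exact exp_add_div_sum_exp_add (fun b => φu b + wt * M' b) _ b

/-- Complexity reduction count: the vanilla clause message sums over exactly
`2^(L-1)` assignments to the other coordinates, while the simplified message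
is a product of exactly `L-1` factors; both yield the same distribution after
softmax normalization with any unary potential. -/
theorem complexity_reduction_count (L : ℕ) (hL : 1 ≤ L) (n : Fin L → Bool)
    (i : Fin L) (Q : Fin L → Bool → ℝ)
    (hQsum : ∀ j, Q j false + Q j true = 1) (hQpos : ∀ j b, 0 ≤ Q j b)
    (M M' : Bool → ℝ)
    (hM : ∀ b, M b = ∑ v : Fin L → Bool,
      if v i = b then
        (if v = n then (0 : ℝ) else 1) * ∏ j ∈ Finset.univ.erase i, Q j (v j)
      else 0)
    (hM' : ∀ b, M' b = (if b = !(n i) then (1 : ℝ) else 0)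
        * ∏ j ∈ Finset.univ.erase i, Q j (n j)) :
    Fintype.card ({j // j ∈ Finset.univ.erase i} → Bool) = 2 ^ (L - 1)
    ∧ (Finset.univ.erase i).card = L - 1
    ∧ ∀ (φu : Bool → ℝ) (wt : ℝ) (b : Bool),
        Real.exp (φu b + wt * M b)
            / (∑ b' : Bool, Real.exp (φu b' + wt * M b'))
          = Real.exp (φu b + wt * M' b)
            / (∑ b' : Bool, Real.exp (φu b' + wt * M' b')) :=
  complexity_reduction_count_general L n i Q hQsum M M' hM hM'
end
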